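/- Let M be a multiline queue, let r be a row and let i ≥ 2 be a column such that L_M(r,i) > r and L_M(r+1,i) ≠ L_M(r,i). Then either L_M(r,i−1) = 0 or L_M(r,i−1) ≥ L_M(r,i). -/

import Mathlib

open scoped BigOperators

namespace MultilineQueue

/-! ### Basic combinatorial utilities -/

/-- The list of columns `1, …, n`. -/
def colsList (n : ℕ) : List ℕ := (List.range n).map (· + 1)

/-- Insert `x` into a weakly decreasing list, keeping it weakly decreasing. -/
def insDesc (x : ℕ) : List ℕ → List ℕ
  | [] => [x]
  | y :: ys => if y ≤ x then x :: y :: ys else y :: insDesc x ys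

/-- Sort a list of naturals in weakly decreasing order. -/
def sortDesc : List ℕ → List ℕ
  | [] => []
  | x :: xs => insDesc x (sortDesc xs)

/-- The positive parts of a weak composition `α` (supported on columns `1,…,n`). -/
def compParts (n : ℕ) (α : ℕ → ℕ) : List ℕ :=
  ((colsList n).map α).filter (fun x => 0 < x)

/-- `sort(α)`: the partition obtained by sorting the positive parts of `α` decreasingly. -/
def sortComp (n : ℕ) (α : ℕ → ℕ) : List ℕ := sortDesc (compParts n α)

/-- The conjugate partition: `(conj l).get j = #{i : l i ≥ j+1}`, for `j = 0,…,l₁-1`. -/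
def conj (l : List ℕ) : List ℕ :=
  (List.range (l.headD 0)).map (fun j => (l.filter (fun x => j < x)).length)

/-- A list is a partition: weakly decreasing with positive parts. -/
def IsPartitionL (l : List ℕ) : Prop := l.Pairwise (· ≥ ·) ∧ ∀ x ∈ l, 0 < x

/-- Dominance order on partitions: `mu ⊴ lam` (same size, partial sums dominated). -/
def Dominates (lam mu : List ℕ) : Prop :=
  mu.sum = lam.sum ∧ ∀ k, (mu.take k).sum ≤ (lam.take k).sum

/-- A weak composition with `n` parts: a function `ℕ → ℕ` supported on `{1,…,n}`. -/
def IsWeakComp (n : ℕ) (α : ℕ → ℕ) : Prop := ∀ j, (j = 0 ∨ n < j) → α j = 0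

/-- The simple transposition `s_i` acting on a weak composition, exchanging
the entries at positions `i` and `i+1`. -/
def swapComp (i : ℕ) (α : ℕ → ℕ) : ℕ → ℕ :=
  fun j => if j = i then α (i + 1) else if j = i + 1 then α i else α j

/-- A strong composition `τ` (a list), regarded as a weak composition with `n`
parts by appending zeros. -/
def padComp (n : ℕ) (τ : List ℕ) : ℕ → ℕ :=
  fun j => if 1 ≤ j ∧ j ≤ n then τ.getD (j - 1) 0 else 0

/-! ### Bracket matching between two rows -/

/-- Classical bracket matching between a bottom row `a` (closing letters) and a top
row `b` (opening letters), reading columns `1,…,n` left to right, and within each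
column the top letter before the bottom letter.  Returns the tuple
`(stack of unmatched opening positions (head = most recent),
  matched positions of `b`, matched positions of `a`,
  unmatched positions of `a` in left-to-right order)`. -/
def scan (n : ℕ) (a b : Finset ℕ) : List ℕ × Finset ℕ × Finset ℕ × List ℕ :=
  (colsList n).foldl
    (fun st j =>
      let stk : List ℕ := if j ∈ b then j :: st.1 else st.1
      if j ∈ a then
        match stk with
        | [] => ([], st.2.1, st.2.2.1, st.2.2.2 ++ [j])
        | x :: rest => (rest, insert x st.2.1, insert j st.2.2.1, st.2.2.2)
      else (stk, st.2.1, st.2.2.1, st.2.2.2))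
    ([], ∅, ∅, [])

/-- `θ(a⊗b)`: the set of elements of the bottom row `a` classically matched when the
top row `b` is bracketed against it. -/
def theta (n : ℕ) (a b : Finset ℕ) : Finset ℕ := (scan n a b).2.2.1

/-- The set of elements of the top row `b` that are classically matched. -/
def matchedTop (n : ℕ) (a b : Finset ℕ) : Finset ℕ := (scan n a b).2.1

/-- `R(a,b)`: cylindrical bracket matching; the unmatched opening parentheses wrap
around and match the leftmost unmatched closing parentheses. -/
def Rcyl (n : ℕ) (a b : Finset ℕ) : Finset ℕ :=
  (scan n a b).2.2.1 ∪ ((scan n a b).2.2.2.take (scan n a b).1.length).toFinset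

/-- `θ(b₁⊗…⊗b_L)`, extended recursively:
`θ(b₁⊗…⊗b_L) = θ(b₁ ⊗ θ(b₂⊗…⊗b_L))`. -/
def thetaTup (n : ℕ) : List (Finset ℕ) → Finset ℕ
  | [] => ∅
  | [b] => b
  | b :: c :: rest => theta n b (thetaTup n (c :: rest))

/-- `R(b₁,…,b_L)`, extended recursively: `R(b₁,…,b_L) = R(b₁, R(b₂,…,b_L))`. -/
def Rtup (n : ℕ) : List (Finset ℕ) → Finset ℕ
  | [] => ∅
  | [b] => b
  | b :: c :: rest => Rcyl n b (Rtup n (c :: rest))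

/-! ### Multiline queues, the FM labelling, type and major index

A multiline queue (or generalized multiline queue) is recorded as a list of
rows, bottom row first; each row is the set of columns containing a ball. -/

/-- The FM label of the ball of the bottom row of `rows` in column `c`
(`0` if there is no ball there): by the corner transfer matrix description of the
Ferrari–Martin algorithm, the bottom-row balls of label `≥ k` are exactly
`R(B₁,…,B_k)`, so the label is the largest such `k`. -/
def botLabel (n : ℕ) (rows : List (Finset ℕ)) (c : ℕ) : ℕ :=
  (Finset.range (rows.length + 1)).sup
    (fun k => if c ∈ Rtup n (rows.take k) then k else 0)

/-- `type(M)`: the weak composition of FM labels on the bottom row. -/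
def typeOf (n : ℕ) (rows : List (Finset ℕ)) : ℕ → ℕ := botLabel n rows

/-- `L_M(r,c)`: the FM label of the ball at row `r` (1-indexed from the bottom),
column `c`; `0` if the site is empty. The labels of row `r` only depend on
rows `r, r+1, …`, for which `c` sits on the bottom row; a strand of length `h`
through row `r` truncates to a strand of length `h − (r−1)` there. -/
def labelAt (n : ℕ) (rows : List (Finset ℕ)) (r c : ℕ) : ℕ :=
  if 1 ≤ r ∧ 0 < botLabel n (rows.drop (r - 1)) c then
    botLabel n (rows.drop (r - 1)) c + (r - 1)
  else 0

/-- `strtype(M)`: the strong type, i.e. the type with its zero entries deleted. -/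
def strtypeOf (n : ℕ) (rows : List (Finset ℕ)) : List ℕ :=
  ((colsList n).map (typeOf n rows)).filter (fun x => x ≠ 0)

/-- `I_k(M)`: the set of columns whose bottom-row label is exactly `k`. -/
def Iset (n : ℕ) (rows : List (Finset ℕ)) (k : ℕ) : Finset ℕ :=
  (Finset.Icc 1 n).filter (fun c => typeOf n rows c = k)

/-- The set of balls of row `r` (1-indexed) of `M` having label `≥ ℓ`. -/
def Sset (n : ℕ) (rows : List (Finset ℕ)) (r ℓ : ℕ) : Finset ℕ :=
  if ℓ ≤ rows.length then Rtup n ((rows.drop (r - 1)).take (ℓ + 1 - r)) else ∅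

/-- The number of balls of row `r` with label `≥ ℓ` whose FM pairing into row
`r−1` wraps around the cylinder: these are precisely the ones that cannot be
matched classically. -/
def wrapCount (n : ℕ) (rows : List (Finset ℕ)) (r ℓ : ℕ) : ℕ :=
  (Sset n rows r ℓ).card - (theta n (rows.getD (r - 2) ∅) (Sset n rows r ℓ)).card

/-- `m_{ℓ,r}`: the number of balls labelled exactly `ℓ` in row `r` whose FM pairing
into row `r−1` wraps. -/
def mWrap (n : ℕ) (rows : List (Finset ℕ)) (ℓ r : ℕ) : ℕ :=
  wrapCount n rows r ℓ - wrapCount n rows r (ℓ + 1)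

/-- The major index `maj(M) = Σ_{2≤ℓ≤L} Σ_{2≤r≤ℓ} m_{ℓ,r}·(ℓ−r+1)`. -/
def maj (n : ℕ) (rows : List (Finset ℕ)) : ℕ :=
  ∑ ℓ ∈ Finset.Icc 2 rows.length, ∑ r ∈ Finset.Icc 2 ℓ, mWrap n rows ℓ r * (ℓ - r + 1)

/-- `M` is a multiline queue of shape `(lam, n)`: it has `lam₁` rows, all contained
in `{1,…,n}`, and row `j` has `lam'_j` balls. -/
def IsMLQ (n : ℕ) (lam : List ℕ) (rows : List (Finset ℕ)) : Prop :=
  rows.length = lam.headD 0 ∧ (∀ B ∈ rows, B ⊆ Finset.Icc 1 n) ∧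
    ∀ j, j < rows.length → (rows.getD j ∅).card = (lam.filter (fun x => j < x)).length

/-- The unique straight (nonwrapping, vertical-strand) multiline queue of type `α`:
its `j`-th row is `{c : α c ≥ j}`. -/
def straight (n : ℕ) (α : ℕ → ℕ) : List (Finset ℕ) :=
  (List.range ((sortComp n α).headD 0)).map
    (fun j => (Finset.Icc 1 n).filter (fun c => j + 1 ≤ α c))

/-! ### Row dropping operators and the collapsing map -/

/-- The saturated row dropping operator `e_i^{↓*}` (for `1 ≤ i < rows.length`):
the pair of rows `(B_i, B_{i+1})` is replaced by `(B_i ∪ u, m)`, where `m` and `u`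
are the matched, resp. unmatched, elements of `B_{i+1}` against `B_i`. -/
def eStar (n : ℕ) (i : ℕ) (rows : List (Finset ℕ)) : List (Finset ℕ) :=
  if 1 ≤ i ∧ i < rows.length then
    let a := rows.getD (i - 1) ∅
    let b := rows.getD i ∅
    let m := matchedTop n a b
    (rows.set (i - 1) (a ∪ (b \ m))).set i m
  else rows

/-- `e^{↓*}_{[b,1]} = e^{↓*}_1 ∘ e^{↓*}_2 ∘ ⋯ ∘ e^{↓*}_b` (applying `e^{↓*}_b` first). -/
def eStarSeq (n b : ℕ) (rows : List (Finset ℕ)) : List (Finset ℕ) :=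
  (List.range b).foldl (fun r k => eStar n (b - k) r) rows

/-- The collapsing operator
`ρ_N = e^{↓*}_{[L−1,1]} ∘ ⋯ ∘ e^{↓*}_{[2,1]} ∘ e^{↓*}_{[1,1]}`; the resulting
empty rows at the top are discarded, so that the result is an honest nonwrapping
multiline queue of its own (smaller) shape. -/
def rhoN (n : ℕ) (rows : List (Finset ℕ)) : List (Finset ℕ) :=
  ((List.range (rows.length - 1)).foldl (fun r i => eStarSeq n (i + 1) r) rows).filter
    (fun B => B ≠ ∅)

/-- `π^{(k)}(M)`: the bottom `k` rows of `M`. -/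
def trunc (rows : List (Finset ℕ)) (k : ℕ) : List (Finset ℕ) := rows.take k

/-- `ρ^{(k)}(M) = ρ_N(π^{(k)}(M))`. -/
def rhoTrunc (n : ℕ) (rows : List (Finset ℕ)) (k : ℕ) : List (Finset ℕ) :=
  rhoN n (trunc rows k)

/-- The intermediate stages `M₁ = M, M₂ = e^{↓*}_{[1,1]}(M₁), …, M_L` of the
collapsing procedure. -/
def stages (n : ℕ) (rows : List (Finset ℕ)) : List (List (Finset ℕ)) :=
  (List.range (rows.length - 1)).scanl (fun r i => eStarSeq n (i + 1) r) rows

/-- The recording tableau `ρ_Q(M)`, as a list of rows (bottom row first):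
row `j+1` receives `|row_{j+1}(M_{j+1})|` boxes with entry `j+1`, and then, at each
later stage `s+1`, `|row_{j+1}(M_{s+1})| − |row_{j+1}(M_s)|` boxes with entry `s+1`. -/
def rhoQ (n : ℕ) (rows : List (Finset ℕ)) : List (List ℕ) :=
  let st := stages n rows
  let L := rows.length
  let size : ℕ → ℕ → ℕ := fun j s => ((st.getD s []).getD j ∅).card
  ((List.range L).map (fun j =>
    List.replicate (size j j) (j + 1) ++
      (((List.range L).filter (fun s => j < s)).map
        (fun s => List.replicate (size j s - size j (s - 1)) (s + 1))).flatten)).filter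
    (fun row => row ≠ [])

/-! ### Column crystal operators -/

/-- Bracket the letters `i` (closing) against `i+1` (opening) in the row word of
`M` (rows top to bottom, right to left within each row).  Returns
`(stack of list-indices of rows with unmatched balls in column i+1 (head = most recent),
  list-indices of rows with unmatched balls in column i, in word order)`. -/
def colScan (n : ℕ) (i : ℕ) (rows : List (Finset ℕ)) : List ℕ × List ℕ :=
  ((List.range rows.length).reverse).foldl
    (fun st r =>
      let stk : List ℕ := if i + 1 ∈ rows.getD r ∅ then r :: st.1 else st.1
      if i ∈ rows.getD r ∅ then
        match stk with
        | [] => ([], st.2 ++ [r])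
        | _ :: rest => (rest, st.2)
      else (stk, st.2))
    ([], [])

/-- The column raising operator `e_i^←`: moves the ball corresponding to the
leftmost unmatched `i+1` of `θ_i(rw(M))` from column `i+1` to column `i`
(identity if there is none). -/
def eCol (n : ℕ) (i : ℕ) (rows : List (Finset ℕ)) : List (Finset ℕ) :=
  match (colScan n i rows).1.getLast? with
  | none => rows
  | some r => rows.set r (insert i ((rows.getD r ∅).erase (i + 1)))

/-- The column lowering operator `f_i^→`: moves the ball corresponding to the
rightmost unmatched `i` of `θ_i(rw(M))` from column `i` to column `i+1`
(identity if there is none). -/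
def fCol (n : ℕ) (i : ℕ) (rows : List (Finset ℕ)) : List (Finset ℕ) :=
  match (colScan n i rows).2.getLast? with
  | none => rows
  | some r => rows.set r (insert (i + 1) ((rows.getD r ∅).erase i))

/-- The 1-indexed row of the ball moved by `e_i^←`, if any. -/
def movedRowE (n : ℕ) (i : ℕ) (rows : List (Finset ℕ)) : Option ℕ :=
  ((colScan n i rows).1.getLast?).map (· + 1)

/-- `M` is `e_i^←`-full: `type(M)_i < type(M)_{i+1}` and `θ_i(rw(M))` contains
exactly one unmatched `i+1`. -/
def isEFull (n : ℕ) (i : ℕ) (rows : List (Finset ℕ)) : Prop :=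
  typeOf n rows i < typeOf n rows (i + 1) ∧ (colScan n i rows).1.length = 1

/-- `M` is `f_i^→`-full: `f_i^→(M)` is `e_i^←`-full. -/
def isFFull (n : ℕ) (i : ℕ) (rows : List (Finset ℕ)) : Prop :=
  isEFull n i (fCol n i rows)

/-- The bottom row `p` of the `i`-active region `act_i(M)`, given the row `r` of the
moved ball and its label `ℓ`: the maximal `p ≤ r` with `L_M(p−1,i) = 0` or
`L_M(p−1,i) ≥ ℓ` (noting `L_M(0,i) = 0`, so `p = 1` always qualifies). -/
def actLow (n : ℕ) (rows : List (Finset ℕ)) (i r ℓ : ℕ) : ℕ :=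
  ((Finset.Icc 1 r).filter
    (fun p => labelAt n rows (p - 1) i = 0 ∨ ℓ ≤ labelAt n rows (p - 1) i)).sup id

/-! ### FM pairings and strands -/

/-- The first element of `s` weakly to the right of `c`, cyclically. -/
def cycNext (s : Finset ℕ) (c : ℕ) : Option ℕ :=
  if h : (s.filter (fun x => c ≤ x)).Nonempty then some ((s.filter (fun x => c ≤ x)).min' h)
  else if h2 : s.Nonempty then some (s.min' h2) else none

/-- Stable insertion into a list sorted weakly decreasingly by `key`. -/
def insKey (key : ℕ → ℕ) (x : ℕ) : List ℕ → List ℕ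
  | [] => [x]
  | y :: ys => if key y ≤ key x then x :: y :: ys else y :: insKey key x ys

/-- Stable sort, weakly decreasing by `key`. -/
def sortKeyDesc (key : ℕ → ℕ) : List ℕ → List ℕ
  | [] => []
  | x :: xs => insKey key x (sortKeyDesc key xs)

/-- The FM pairings from row `r+1` to row `r` (1-indexed `r ≥ 1`): the balls of row
`r+1` are processed in decreasing order of label (left to right among equal labels),
each pairing to the first unpaired ball of row `r` weakly to its right, cyclically.
Returns the list of pairs `(source column in row r+1, target column in row r)`. -/
def pairsAt (n : ℕ) (rows : List (Finset ℕ)) (r : ℕ) : List (ℕ × ℕ) :=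
  let top := rows.getD r ∅
  let bot := rows.getD (r - 1) ∅
  let order := sortKeyDesc (fun c => labelAt n rows (r + 1) c)
    ((colsList n).filter (fun c => decide (c ∈ top)))
  (order.foldl (fun (st : Finset ℕ × List (ℕ × ℕ)) c =>
      match cycNext st.1 c with
      | some t => (st.1.erase t, st.2 ++ [(c, t)])
      | none => st) (bot, [])).2

/-- The column of the ball of row `r` to which the ball of row `r+1` in column `c`
is paired by the FM algorithm. -/
def pairedTo (n : ℕ) (rows : List (Finset ℕ)) (r c : ℕ) : Option ℕ :=
  ((pairsAt n rows r).find? (fun p => decide (p.1 = c))).map (·.2)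

/-- A strand of `M`: a nonempty sequence of columns `s = [c₁, …, c_h]` with the ball
`c_t` in row `t`, the ball `c_{t+1}` paired to `c_t` for each `t`, and the top ball
`c_h` not paired to from row `h+1`. -/
def IsStrand (n : ℕ) (rows : List (Finset ℕ)) (s : List ℕ) : Prop :=
  s ≠ [] ∧
  (∀ t, t < s.length → s.getD t 0 ∈ rows.getD t ∅) ∧
  (∀ t, t + 1 < s.length → pairedTo n rows (t + 1) (s.getD (t + 1) 0) = some (s.getD t 0)) ∧
  (∀ c, pairedTo n rows s.length c ≠ some (s.getD (s.length - 1) 0))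

/-! ### Semistandard Young tableaux and the charge statistic -/

/-- `Q` is a semistandard Young tableau of shape `sh` and content `ct`, recorded as a
list of rows (bottom row first, French convention), each row a list of entries:
rows weakly increase, columns strictly increase from bottom to top, and for every
`m ≥ 1` the entry `m` occurs `ct_{m}` times. -/
def IsSSYT (Q : List (List ℕ)) (sh ct : List ℕ) : Prop :=
  Q.map List.length = sh ∧
  (∀ row ∈ Q, row.Pairwise (· ≤ ·)) ∧
  (∀ row ∈ Q, ∀ x ∈ row, 0 < x) ∧
  (∀ j k, j + 1 < Q.length → k < (Q.getD (j + 1) []).length →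
      (Q.getD j []).getD k 0 < (Q.getD (j + 1) []).getD k 0) ∧
  (∀ m, 0 < m → ((Q.flatten).filter (fun x => x = m)).length = ct.getD (m - 1) 0)

/-- Find the rightmost occurrence of the value `v` at a position `≤ pos` in the
indexed word `l`; if none, wrap around (cyclically) and take the rightmost
occurrence of `v` overall.  Returns the position together with a flag recording
whether the search wrapped. -/
def chargeFind (l : List (ℕ × ℕ)) (v pos : ℕ) : Option (ℕ × Bool) :=
  match (l.filter (fun p => decide (p.2 = v ∧ p.1 ≤ pos))).getLast? with
  | some p => some (p.1, false)
  | none =>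
    match (l.filter (fun p => decide (p.2 = v))).getLast? with
    | some p => some (p.1, true)
    | none => none

/-- Extract (the rest of) one standard subword, consisting of the letters
`v, v+1, v+2, …`, scanning right to left cyclically from position `pos`; `idx` is
the charge index of the previously extracted letter, incremented whenever the next
letter is found to its right (i.e. when the leftward search wraps around), kept
otherwise.  Returns the total charge contribution of the extracted letters
together with the remaining word. -/
def extractCharge : ℕ → List (ℕ × ℕ) → ℕ → ℕ → ℕ → ℕ × List (ℕ × ℕ)
  | 0, l, _, _, _ => (0, l)
  | fuel + 1, l, v, pos, idx =>
    match chargeFind l v pos with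
    | none => (0, l)
    | some pw =>
      let idx' := if pw.2 then idx + 1 else idx
      let r := extractCharge fuel (l.filter (fun q => decide (q.1 ≠ pw.1))) (v + 1)
        (pw.1 - 1) idx'
      (idx' + r.1, r.2)

/-- The Lascoux–Schützenberger charge of an indexed word: repeatedly extract a
standard subword (starting from the rightmost `1`, whose index is `0`) and add up
the charge contributions. -/
def chargeWordAux : ℕ → List (ℕ × ℕ) → ℕ
  | 0, _ => 0
  | fuel + 1, l =>
    match chargeFind l 1 l.length with
    | none => 0
    | some pw =>
      let r := extractCharge l.length (l.filter (fun q => decide (q.1 ≠ pw.1))) 2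
        (pw.1 - 1) 0
      r.1 + chargeWordAux fuel r.2

/-- The charge of a word. -/
def chargeWord (w : List ℕ) : ℕ := chargeWordAux w.length (w.zipIdx.map Prod.swap)

/-- The charge of a tableau: the charge of its reading word (rows read top to
bottom, left to right within each row). -/
def tabCharge (Q : List (List ℕ)) : ℕ := chargeWord Q.reverse.flatten

/-! ### Polynomials -/

/-- The content monomial `x^M = Π_j Π_{c ∈ B_j} x_c`, with coefficients in `ℤ[q]`. -/
noncomputable def xM (n : ℕ) (rows : List (Finset ℕ)) :
    MvPolynomial ℕ (Polynomial ℤ) :=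
  (rows.map (fun B => ∏ c ∈ B, (MvPolynomial.X c : MvPolynomial ℕ (Polynomial ℤ)))).prod

/-- `q^k` as a coefficient. -/
noncomputable def qpow (k : ℕ) : Polynomial ℤ := Polynomial.X ^ k

/-- The `t = 0` ASEP polynomial `f_α(X;q,0) = Σ_{M ∈ MLQ(α)} q^{maj(M)} x^M`. -/
noncomputable def fASEP (n : ℕ) (α : ℕ → ℕ) : MvPolynomial ℕ (Polynomial ℤ) :=
  ∑ᶠ (rows : List (Finset ℕ))
    (_ : IsMLQ n (sortComp n α) rows ∧ typeOf n rows = α),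
    MvPolynomial.C (qpow (maj n rows)) * xM n rows

/-- The Demazure atom `𝒜_β(X) = Σ_{M ∈ NMLQ(β)} x^M`. -/
noncomputable def atom (n : ℕ) (β : ℕ → ℕ) : MvPolynomial ℕ (Polynomial ℤ) :=
  ∑ᶠ (rows : List (Finset ℕ))
    (_ : IsMLQ n (sortComp n β) rows ∧ maj n rows = 0 ∧ typeOf n rows = β),
    xM n rows

/-- The `t = 0` quasisymmetric Macdonald polynomial
`G_γ(X;q,0) = Σ_{M ∈ SMLQ(γ)} q^{maj(M)} x^M`. -/
noncomputable def Gqsym (n : ℕ) (γ : List ℕ) : MvPolynomial ℕ (Polynomial ℤ) :=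
  ∑ᶠ (rows : List (Finset ℕ))
    (_ : IsMLQ n (sortDesc γ) rows ∧ strtypeOf n rows = γ),
    MvPolynomial.C (qpow (maj n rows)) * xM n rows

/-- The quasisymmetric Schur polynomial `QS_τ(X) = Σ_{M ∈ SNMLQ(τ)} x^M`. -/
noncomputable def QSpoly (n : ℕ) (τ : List ℕ) : MvPolynomial ℕ (Polynomial ℤ) :=
  ∑ᶠ (rows : List (Finset ℕ))
    (_ : IsMLQ n (sortDesc τ) rows ∧ maj n rows = 0 ∧ strtypeOf n rows = τ),
    xM n rows

/-- The nonsymmetric Kostka–Foulkes polynomial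
`K_{α,β}(q) = Σ_Q q^{charge(Q)}`, the sum over the semistandard Young tableaux `Q`
of shape `sort(β)'` and content `sort(α)'` such that `type(ρ^{-1}(M_β, Q)) = α`,
the preimage being expressed via the collapsing bijection `ρ = (ρ_N, ρ_Q)`. -/
noncomputable def Kpoly (n : ℕ) (α β : ℕ → ℕ) : Polynomial ℤ :=
  ∑ᶠ (Q : List (List ℕ))
    (_ : IsSSYT Q (conj (sortComp n β)) (conj (sortComp n α)) ∧
      ∃ rows : List (Finset ℕ), IsMLQ n (sortComp n α) rows ∧
        rhoN n rows = straight n β ∧ rhoQ n rows = Q ∧ typeOf n rows = α),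
    qpow (tabCharge Q)

/-- The quasisymmetric Kostka–Foulkes polynomial
`K_{γ,τ}(q) = Σ_Q q^{charge(Q)}`, the sum over the semistandard Young tableaux `Q`
of shape `sort(τ)'` and content `sort(γ)'` such that `strtype(ρ^{-1}(M_τ, Q)) = γ`. -/
noncomputable def KpolyQ (n : ℕ) (γ τ : List ℕ) : Polynomial ℤ :=
  ∑ᶠ (Q : List (List ℕ))
    (_ : IsSSYT Q (conj (sortDesc τ)) (conj (sortDesc γ)) ∧
      ∃ rows : List (Finset ℕ), IsMLQ n (sortDesc γ) rows ∧
        rhoN n rows = straight n (padComp n τ) ∧ rhoQ n rows = Q ∧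
        strtypeOf n rows = γ),
    qpow (tabCharge Q)


/-! ### Auxiliary lemmas for Statement 16 -/

section Aux16

variable {n : ℕ}

/-- The step function of `scan`, extracted. -/
def scanStep (a b : Finset ℕ) (st : List ℕ × Finset ℕ × Finset ℕ × List ℕ) (j : ℕ) :
    List ℕ × Finset ℕ × Finset ℕ × List ℕ :=
  let stk : List ℕ := if j ∈ b then j :: st.1 else st.1
  if j ∈ a then
    match stk with
    | [] => ([], st.2.1, st.2.2.1, st.2.2.2 ++ [j])
    | x :: rest => (rest, insert x st.2.1, insert j st.2.2.1, st.2.2.2)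
  else (stk, st.2.1, st.2.2.1, st.2.2.2)

lemma scan_eq_foldl (a b : Finset ℕ) :
    scan n a b = (colsList n).foldl (scanStep a b) ([], ∅, ∅, []) := rfl

variable {a b : Finset ℕ}

lemma scanStep_mb (st : List ℕ × Finset ℕ × Finset ℕ × List ℕ) (j : ℕ) :
    (scanStep a b st j).2.2.1 = st.2.2.1 ∨
      ((scanStep a b st j).2.2.1 = insert j st.2.2.1 ∧ j ∈ a) := by
  obtain ⟨stk, mt, mb, ub⟩ := st
  by_cases hb : j ∈ b <;> by_cases ha : j ∈ a <;>
    rcases stk with _ | ⟨x, rest⟩ <;>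
    simp [scanStep, hb, ha]

lemma scanStep_ub (st : List ℕ × Finset ℕ × Finset ℕ × List ℕ) (j : ℕ) :
    (scanStep a b st j).2.2.2 = st.2.2.2 ∨
      ((scanStep a b st j).2.2.2 = st.2.2.2 ++ [j] ∧ j ∈ a) := by
  obtain ⟨stk, mt, mb, ub⟩ := st
  by_cases hb : j ∈ b <;> by_cases ha : j ∈ a <;>
    rcases stk with _ | ⟨x, rest⟩ <;>
    simp [scanStep, hb, ha]

lemma scanStep_mb_mono (st : List ℕ × Finset ℕ × Finset ℕ × List ℕ) (j : ℕ) :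
    st.2.2.1 ⊆ (scanStep a b st j).2.2.1 := by
  rcases scanStep_mb (a := a) (b := b) st j with h | ⟨h, _⟩ <;> rw [h]
  exact Finset.subset_insert _ _

lemma foldl_mb_mono (l : List ℕ) (st : List ℕ × Finset ℕ × Finset ℕ × List ℕ) :
    st.2.2.1 ⊆ (l.foldl (scanStep a b) st).2.2.1 := by
  induction l generalizing st with
  | nil => exact subset_rfl
  | cons j l ih => exact (scanStep_mb_mono st j).trans (ih _)

lemma foldl_mb_subset (l : List ℕ) (st : List ℕ × Finset ℕ × Finset ℕ × List ℕ) :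
    (l.foldl (scanStep a b) st).2.2.1 ⊆ st.2.2.1 ∪ l.toFinset := by
  induction l generalizing st with
  | nil => simp
  | cons j l ih =>
    refine (ih (scanStep a b st j)).trans ?_
    rcases scanStep_mb (a := a) (b := b) st j with h | ⟨h, _⟩ <;> rw [h] <;>
      intro x hx <;> simp only [Finset.mem_union, List.toFinset_cons, Finset.mem_insert] at hx ⊢ <;> tauto

lemma foldl_ub_eq (l : List ℕ) (st : List ℕ × Finset ℕ × Finset ℕ × List ℕ) :
    ∃ e : List ℕ, (l.foldl (scanStep a b) st).2.2.2 = st.2.2.2 ++ e ∧ ∀ x ∈ e, x ∈ l := by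
  induction l generalizing st with
  | nil => exact ⟨[], by simp⟩
  | cons j l ih =>
    obtain ⟨e, he, hmem⟩ := ih (scanStep a b st j)
    rcases scanStep_ub (a := a) (b := b) st j with h | ⟨h, _⟩
    · exact ⟨e, by simp [List.foldl_cons, he, h], fun x hx => List.mem_cons_of_mem _ (hmem x hx)⟩
    · refine ⟨j :: e, ?_, ?_⟩
      · simp [List.foldl_cons, he, h]
      · intro x hx
        rcases List.mem_cons.mp hx with rfl | hx
        · exact List.mem_cons_self
        · exact List.mem_cons_of_mem _ (hmem x hx)

lemma foldl_closer_inv (l : List ℕ) (st : List ℕ × Finset ℕ × Finset ℕ × List ℕ)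
    (h1 : st.2.2.1 ⊆ a) (h2 : ∀ x ∈ st.2.2.2, x ∈ a) :
    (l.foldl (scanStep a b) st).2.2.1 ⊆ a ∧
      ∀ x ∈ (l.foldl (scanStep a b) st).2.2.2, x ∈ a := by
  induction l generalizing st with
  | nil => exact ⟨h1, h2⟩
  | cons j l ih =>
    refine ih (scanStep a b st j) ?_ ?_
    · rcases scanStep_mb (a := a) (b := b) st j with h | ⟨h, hj⟩ <;> rw [h]
      · exact h1
      · exact Finset.insert_subset hj h1
    · rcases scanStep_ub (a := a) (b := b) st j with h | ⟨h, hj⟩ <;> rw [h]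
      · exact h2
      · intro x hx
        rcases List.mem_append.mp hx with hx | hx
        · exact h2 x hx
        · rw [List.mem_singleton.mp hx]; exact hj

lemma Rcyl_subset (a b : Finset ℕ) : Rcyl n a b ⊆ a := by
  have h := foldl_closer_inv (a := a) (b := b) (colsList n) ([], ∅, ∅, []) (by simp) (by simp)
  rw [← scan_eq_foldl] at h
  intro x hx
  rcases Finset.mem_union.mp hx with hx | hx
  · exact h.1 hx
  · exact h.2 x (List.take_subset _ _ (List.mem_toFinset.mp hx))

lemma mem_colsList {m x : ℕ} : x ∈ colsList m ↔ 1 ≤ x ∧ x ≤ m := by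
  simp only [colsList, List.mem_map, List.mem_range]
  constructor
  · rintro ⟨y, hy, rfl⟩; omega
  · rintro ⟨h1, h2⟩; exact ⟨x - 1, by omega, by omega⟩

/-- If `i` is both an opener and a closer, it is classically matched (to itself). -/
lemma mem_theta_of_mem_inter {i : ℕ} (hi : 1 ≤ i) (hin : i ≤ n) (ha : i ∈ a) (hb : i ∈ b) :
    i ∈ theta n a b := by
  obtain ⟨l₁, l₂, hsplit⟩ := List.append_of_mem (mem_colsList.mpr ⟨hi, hin⟩)
  have : theta n a b = ((l₂.foldl (scanStep a b)
      (scanStep a b (l₁.foldl (scanStep a b) ([], ∅, ∅, [])) i))).2.2.1 := by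
    show (scan n a b).2.2.1 = _
    rw [scan_eq_foldl, hsplit, List.foldl_append, List.foldl_cons]
  rw [this]
  refine foldl_mb_mono l₂ _ ?_
  set st := l₁.foldl (scanStep a b) ([], ∅, ∅, [])
  unfold scanStep
  simp [ha, hb]

lemma theta_subset_Rcyl (a b : Finset ℕ) : theta n a b ⊆ Rcyl n a b :=
  Finset.subset_union_left

lemma colsList_succ (m : ℕ) : colsList (m + 1) = colsList m ++ [m + 1] := by
  simp [colsList, List.range_succ]

lemma colsList_split : ∀ {n i : ℕ}, 2 ≤ i → i ≤ n →
    ∃ l₁ l₂ : List ℕ, colsList n = l₁ ++ (i - 1) :: i :: l₂ ∧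
      (∀ x ∈ l₁, x < i - 1) ∧ (∀ x ∈ l₂, i < x) := by
  intro n
  induction n with
  | zero => intro i h1 h2; omega
  | succ m ih =>
    intro i h1 h2
    rcases Nat.lt_or_ge i (m + 1) with hlt | hge
    · obtain ⟨l₁, l₂, heq, hbd1, hbd2⟩ := ih h1 (by omega)
      refine ⟨l₁, l₂ ++ [m + 1], by rw [colsList_succ, heq]; simp, hbd1, ?_⟩
      intro x hx
      rcases List.mem_append.mp hx with hx | hx
      · exact hbd2 x hx
      · simp at hx; omega
    · have hi : i = m + 1 := by omega
      have hm : 1 ≤ m := by omega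
      have h3 : colsList m = colsList (m - 1) ++ [m] := by
        have := colsList_succ (m - 1)
        rw [show m - 1 + 1 = m from by omega] at this
        exact this
      refine ⟨colsList (m - 1), [], ?_, ?_, by simp⟩
      · rw [colsList_succ, h3, hi]
        simp [show m + 1 - 1 = m from rfl]
      · intro x hx
        have := mem_colsList.mp hx
        omega

lemma scanStep_closer_of_stk_nil (st : List ℕ × Finset ℕ × Finset ℕ × List ℕ) {j : ℕ}
    (hj : j ∈ a) (h : (if j ∈ b then j :: st.1 else st.1) = []) :
    scanStep a b st j = ([], st.2.1, st.2.2.1, st.2.2.2 ++ [j]) := by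
  simp [scanStep, hj, h]

lemma scanStep_closer_of_stk_cons (st : List ℕ × Finset ℕ × Finset ℕ × List ℕ) {j x : ℕ}
    {rest : List ℕ} (hj : j ∈ a) (h : (if j ∈ b then j :: st.1 else st.1) = x :: rest) :
    scanStep a b st j = (rest, insert x st.2.1, insert j st.2.2.1, st.2.2.2) := by
  simp [scanStep, hj, h]

/-- Key lemma: if `i` is cylindrically matched but its left neighbour `i-1` is a
closer that is not, then `i` must be an opener. -/
lemma mem_top_of_consec {i : ℕ} (hi : 2 ≤ i) (hin : i ≤ n)
    (hmem : i ∈ Rcyl n a b) (hprev : i - 1 ∈ a) (hprev' : i - 1 ∉ Rcyl n a b) :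
    i ∈ b := by
  by_contra hb
  have hia : i ∈ a := Rcyl_subset a b hmem
  obtain ⟨l₁, l₂, hsplit, hbd1, hbd2⟩ := colsList_split hi hin
  set st₀ := l₁.foldl (scanStep a b) (([], ∅, ∅, []) : List ℕ × Finset ℕ × Finset ℕ × List ℕ)
    with hst₀
  have hub₀ : ∀ x ∈ st₀.2.2.2, x < i - 1 := by
    obtain ⟨e, he, hmeme⟩ := foldl_ub_eq (a := a) (b := b) l₁ ([], ∅, ∅, [])
    intro x hx
    rw [hst₀, he] at hx
    simp only [List.nil_append] at hx
    exact hbd1 x (hmeme x hx)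
  have hmb₀ : ∀ x ∈ st₀.2.2.1, x < i - 1 := by
    intro x hx
    have h' := foldl_mb_subset (a := a) (b := b) l₁ ([], ∅, ∅, []) hx
    rw [Finset.mem_union] at h'
    rcases h' with h' | h'
    · simp at h'
    · exact hbd1 x (List.mem_toFinset.mp h')
  rcases hstk : (if i - 1 ∈ b then (i - 1) :: st₀.1 else st₀.1) with _ | ⟨x, rest⟩
  · -- `i-1` is unmatched; then so is `i`, and it sits right after `i-1` in the queue
    have h1 : scanStep a b st₀ (i - 1) = ([], st₀.2.1, st₀.2.2.1, st₀.2.2.2 ++ [i - 1]) :=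
      scanStep_closer_of_stk_nil st₀ hprev hstk
    have h2 : scanStep a b (scanStep a b st₀ (i - 1)) i
        = ([], st₀.2.1, st₀.2.2.1, (st₀.2.2.2 ++ [i - 1]) ++ [i]) := by
      rw [h1]
      exact scanStep_closer_of_stk_nil _ hia (by simp [hb])
    have hscan : scan n a b =
        l₂.foldl (scanStep a b) ([], st₀.2.1, st₀.2.2.1, (st₀.2.2.2 ++ [i - 1]) ++ [i]) := by
      rw [scan_eq_foldl, hsplit, List.foldl_append, List.foldl_cons, List.foldl_cons, ← hst₀, h2]
    obtain ⟨e, he, hmeme⟩ := foldl_ub_eq (a := a) (b := b) l₂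
      ([], st₀.2.1, st₀.2.2.1, (st₀.2.2.2 ++ [i - 1]) ++ [i])
    have heq : ((st₀.2.2.2 ++ [i - 1]) ++ [i]) ++ e = st₀.2.2.2 ++ (i - 1) :: i :: e := by simp
    rw [Rcyl, hscan] at hmem hprev'
    rw [Finset.mem_union] at hmem
    rcases hmem with hmem | hmem
    · -- `i` cannot be classically matched
      have h' := foldl_mb_subset (a := a) (b := b) l₂ _ hmem
      rw [Finset.mem_union] at h'
      rcases h' with h' | h'
      · exact absurd (hmb₀ i h') (by omega)
      · exact absurd (hbd2 i (List.mem_toFinset.mp h')) (by omega)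
    · -- `i` is matched by wrapping; then `i - 1` is too, contradiction
      rw [List.mem_toFinset, he, heq, List.take_append] at hmem
      rcases List.mem_append.mp hmem with h' | h'
      · exact absurd (hub₀ i (List.take_subset _ _ h')) (by omega)
      · exfalso
        apply hprev'
        rw [Finset.mem_union]
        right
        rw [List.mem_toFinset, he, heq, List.take_append]
        apply List.mem_append_right
        rcases hk : (List.foldl (scanStep a b)
            ([], st₀.2.1, st₀.2.2.1, st₀.2.2.2 ++ [i - 1] ++ [i]) l₂).1.length
              - st₀.2.2.2.length with _ | k'
        · rw [hk] at h'
          simp at h'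
        · rw [List.take_succ_cons]
          exact List.mem_cons_self
  · -- `i-1` is classically matched: contradiction
    exfalso
    apply hprev'
    apply theta_subset_Rcyl
    show i - 1 ∈ (scan n a b).2.2.1
    rw [scan_eq_foldl, hsplit, List.foldl_append, List.foldl_cons, List.foldl_cons, ← hst₀,
      scanStep_closer_of_stk_cons st₀ hprev hstk]
    exact foldl_mb_mono l₂ _ (scanStep_mb_mono _ i (Finset.mem_insert_self _ _))

lemma Rtup_cons (B : Finset ℕ) {l : List (Finset ℕ)} (hl : l ≠ []) :
    Rtup n (B :: l) = Rcyl n B (Rtup n l) := by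
  cases l with
  | nil => exact absurd rfl hl
  | cons c rest => rfl

lemma Rtup_cons_subset (B : Finset ℕ) (l : List (Finset ℕ)) : Rtup n (B :: l) ⊆ B := by
  cases l with
  | nil => exact Finset.Subset.refl _
  | cons c rest => exact Rcyl_subset _ _

lemma botLabel_le (rows : List (Finset ℕ)) (c : ℕ) : botLabel n rows c ≤ rows.length := by
  apply Finset.sup_le
  intro k hk
  rw [Finset.mem_range] at hk
  split
  · omega
  · omega

lemma le_botLabel {rows : List (Finset ℕ)} {c k : ℕ} (hk : k ≤ rows.length)
    (hc : c ∈ Rtup n (rows.take k)) : k ≤ botLabel n rows c := by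
  have h := Finset.le_sup (f := fun k => if c ∈ Rtup n (rows.take k) then k else 0)
    (Finset.mem_range.mpr (by omega : k < rows.length + 1))
  simp only [hc, if_true] at h
  exact h

lemma mem_Rtup_botLabel {rows : List (Finset ℕ)} {c : ℕ} (h : 0 < botLabel n rows c) :
    c ∈ Rtup n (rows.take (botLabel n rows c)) := by
  obtain ⟨k, hk, hsup⟩ := Finset.exists_mem_eq_sup (Finset.range (rows.length + 1))
    ⟨0, Finset.mem_range.mpr (Nat.succ_pos _)⟩
    (fun k => if c ∈ Rtup n (rows.take k) then k else 0)
  rw [botLabel] at h ⊢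
  rw [hsup] at h ⊢
  split at h
  case isTrue hmem => rwa [if_pos hmem]
  case isFalse => omega

end Aux16

/-- Let `M` be a multiline queue, `r` a row, `i ≥ 2` a column
with `L_M(r,i) > r` and `L_M(r+1,i) ≠ L_M(r,i)`.  Then `L_M(r,i−1) = 0` or
`L_M(r,i−1) ≥ L_M(r,i)`. -/
theorem statement16 (n : ℕ) (hn : 1 ≤ n) (lam : List ℕ) (hlam : IsPartitionL lam)
    (hlen : lam.length < n) (M : List (Finset ℕ)) (hM : IsMLQ n lam M)
    (r i : ℕ) (hr : 1 ≤ r) (hi : 2 ≤ i) (hin : i ≤ n)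
    (h1 : r < labelAt n M r i) (h2 : labelAt n M (r + 1) i ≠ labelAt n M r i) :
    labelAt n M r (i - 1) = 0 ∨ labelAt n M r i ≤ labelAt n M r (i - 1) := by
  by_cases h0 : labelAt n M r (i - 1) = 0
  · exact Or.inl h0
  right
  -- unfold the label at (r, i)
  have hc : 1 ≤ r ∧ 0 < botLabel n (M.drop (r - 1)) i := by
    by_contra hcn
    rw [labelAt, if_neg hcn] at h1
    omega
  rw [labelAt, if_pos hc] at h1
  obtain ⟨b, hbdef⟩ : ∃ b, botLabel n (M.drop (r - 1)) i = b := ⟨_, rfl⟩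
  rw [hbdef] at h1
  have hb2 : 2 ≤ b := by omega
  have hble : b ≤ (M.drop (r - 1)).length := by
    rw [← hbdef]; exact botLabel_le _ _
  have hmem : i ∈ Rtup n ((M.drop (r - 1)).take b) := by
    rw [← hbdef]
    exact mem_Rtup_botLabel (by omega)
  obtain ⟨a, t, hrows⟩ : ∃ a t, M.drop (r - 1) = a :: t := by
    rcases hrr : M.drop (r - 1) with _ | ⟨a, t⟩
    · rw [hrr] at hble; simp at hble; omega
    · exact ⟨_, _, rfl⟩
  rw [hrows] at hble
  simp only [List.length_cons] at hble
  have htne : t ≠ [] := by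
    intro h
    rw [h] at hble
    simp at hble
    omega
  have htake : ∀ k : ℕ, 1 ≤ k → (a :: t).take k = a :: t.take (k - 1) := by
    intro k hk
    rcases k with _ | k'
    · omega
    · simp [List.take_succ_cons]
  have htke : ∀ k : ℕ, 2 ≤ k → k - 1 ≤ t.length → t.take (k - 1) ≠ [] := by
    intro k hk1 _ h
    rcases List.take_eq_nil_iff.mp h with h' | h'
    · omega
    · exact htne h'
  have hmem' : i ∈ Rcyl n a (Rtup n (t.take (b - 1))) := by
    rw [hrows, htake b (by omega), Rtup_cons a (htke b (by omega) (by omega))] at hmem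
    exact hmem
  have hia : i ∈ a := Rcyl_subset _ _ hmem'
  -- the ball at (r, i-1)
  have hc' : 1 ≤ r ∧ 0 < botLabel n (M.drop (r - 1)) (i - 1) := by
    by_contra hcn
    rw [labelAt, if_neg hcn] at h0
    exact h0 rfl
  obtain ⟨b1, hb1def⟩ : ∃ b1, botLabel n (M.drop (r - 1)) (i - 1) = b1 := ⟨_, rfl⟩
  have hb1pos : 1 ≤ b1 := by
    have := hc'.2; omega
  have hprev : i - 1 ∈ a := by
    have h' : i - 1 ∈ Rtup n ((M.drop (r - 1)).take b1) := by
      rw [← hb1def]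
      exact mem_Rtup_botLabel hc'.2
    rw [hrows, htake b1 hb1pos] at h'
    exact Rtup_cons_subset _ _ h'
  -- key claim
  have hdrop : M.drop r = t := by
    have h' := List.drop_drop (i := 1) (j := r - 1) (l := M)
    rw [hrows] at h'
    simp only [List.drop_one, List.tail_cons] at h'
    rw [show r - 1 + 1 = r from by omega] at h'
    exact h'.symm
  have hkey : i - 1 ∈ Rcyl n a (Rtup n (t.take (b - 1))) := by
    by_contra hno
    have hS : i ∈ Rtup n (t.take (b - 1)) := mem_top_of_consec hi hin hmem' hprev hno
    have hm1 : b - 1 ≤ botLabel n t i := le_botLabel (by omega) hS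
    have hlab : labelAt n M (r + 1) i = botLabel n t i + r := by
      rw [labelAt, show r + 1 - 1 = r from by omega, hdrop, if_pos ⟨by omega, by omega⟩]
    have hlabi : labelAt n M r i = b + (r - 1) := by
      rw [labelAt, if_pos hc, hbdef]
    rw [hlab, hlabi] at h2
    have hm : b ≤ botLabel n t i := by omega
    have hmle : botLabel n t i ≤ t.length := botLabel_le _ _
    have hmem2 : i ∈ Rtup n (t.take (botLabel n t i)) := mem_Rtup_botLabel (by omega)
    have hup : i ∈ Rcyl n a (Rtup n (t.take (botLabel n t i))) :=
      theta_subset_Rcyl _ _ (mem_theta_of_mem_inter (by omega) hin hia hmem2)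
    have hne2 : t.take (botLabel n t i) ≠ [] := by
      intro hh
      rcases List.take_eq_nil_iff.mp hh with h' | h'
      · omega
      · exact htne h'
    have hgt : botLabel n t i + 1 ≤ botLabel n (M.drop (r - 1)) i := by
      apply le_botLabel
      · rw [hrows]; simp; omega
      · rw [hrows, htake _ (by omega), Nat.add_sub_cancel, Rtup_cons a hne2]
        exact hup
    omega
  -- conclude
  have hfin : b ≤ botLabel n (M.drop (r - 1)) (i - 1) := by
    apply le_botLabel
    · rw [hrows]; simp; omega
    · rw [hrows, htake b (by omega), Rtup_cons a (htke b (by omega) (by omega))]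
      exact hkey
  rw [labelAt, labelAt, if_pos hc, if_pos hc', hbdef]
  omega

end MultilineQueue
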